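/- Let S ⊆ ℝ be closed and bounded from below, let T₁ < T₂ be real numbers, and let O ⊆ (T₁, T₂) be an open set with S ∩ [T₁, T₂] equal to the closure of O. Then there exists a sequence (s_k)_{k∈ℕ} of real numbers such that the set of accumulation points of (s_k) equals S and every term s_k that lies in [T₁, T₂] belongs to O. -/

import Mathlib

/-- The set of accumulation points of a sequence `s : ℕ → ℝ`: points every neighborhood of
which contains terms of the sequence for infinitely many indices. -/
def SeqAccPts (s : ℕ → ℝ) : Set ℝ :=
  {l | ∀ ε > 0, {k : ℕ | |s k - l| < ε}.Infinite}

/-- Let `S ⊆ ℝ` be closed and bounded from below, `T₁ < T₂`, and let `O ⊆ (T₁, T₂)` be open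
with `S ∩ [T₁, T₂] = closure O`. Then there is a sequence `(s_k)` whose set of accumulation
points equals `S` and each term lying in `[T₁, T₂]` belongs to `O`. -/
theorem stmt15 (S : Set ℝ) (hScl : IsClosed S) (hSbb : BddBelow S)
    (T₁ T₂ : ℝ) (hT : T₁ < T₂)
    (O : Set ℝ) (hO : IsOpen O) (hOsub : O ⊆ Set.Ioo T₁ T₂)
    (hSO : S ∩ Set.Icc T₁ T₂ = closure O) :
    ∃ s : ℕ → ℝ, SeqAccPts s = S ∧ ∀ k, s k ∈ Set.Icc T₁ T₂ → s k ∈ O := by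
  classical
  rcases Set.eq_empty_or_nonempty S with hS | hS
  · refine ⟨fun k => T₂ + 1 + k, ?_, ?_⟩
    · rw [hS]
      ext l
      simp only [SeqAccPts, Set.mem_setOf_eq, Set.mem_empty_iff_false, iff_false]
      push_neg
      refine ⟨1, one_pos, ?_⟩
      apply Set.Finite.subset (Set.finite_Icc 0 ⌈l - T₂⌉₊)
      intro k hk
      simp only [Set.mem_setOf_eq] at hk
      have h1 : T₂ + 1 + (k : ℝ) - l < 1 := (abs_lt.mp hk).2
      have h2 : (k : ℝ) < l - T₂ := by linarith
      have h3 : (k : ℝ) < (⌈l - T₂⌉₊ : ℝ) := lt_of_lt_of_le h2 (Nat.le_ceil _)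
      exact Set.mem_Icc.mpr ⟨Nat.zero_le _, by exact_mod_cast h3.le⟩
    · intro k hk
      exfalso
      have : T₂ + 1 + (k : ℝ) ≤ T₂ := (Set.mem_Icc.mp hk).2
      have : (0 : ℝ) ≤ (k : ℝ) := Nat.cast_nonneg k
      linarith
  · have hne : Nonempty S := hS.to_subtype
    obtain ⟨u, hu⟩ := TopologicalSpace.exists_dense_seq S
    set f : ℕ → ℝ := fun n => (u n : ℝ) with hf
    have hfS : ∀ n, f n ∈ S := fun n => (u n).2
    have hdense : ∀ x ∈ S, ∀ ε : ℝ, 0 < ε → ∃ n, |f n - x| < ε := by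
      intro x hx ε hε
      obtain ⟨n, hn⟩ := hu.exists_dist_lt (⟨x, hx⟩ : S) hε
      refine ⟨n, ?_⟩
      rw [Subtype.dist_eq, Real.dist_eq] at hn
      rw [abs_sub_comm]
      exact hn
    have hchoice : ∀ n m : ℕ, ∃ y : ℝ,
        |y - f n| < 1 / (n + m + 1 : ℝ) ∧ (y ∈ Set.Icc T₁ T₂ → y ∈ O) := by
      intro n m
      have hpos : (0 : ℝ) < 1 / (n + m + 1 : ℝ) := by positivity
      by_cases h : f n ∈ Set.Icc T₁ T₂
      · have hcl : f n ∈ closure O := hSO ▸ ⟨hfS n, h⟩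
        obtain ⟨y, hyO, hyd⟩ := Metric.mem_closure_iff.mp hcl _ hpos
        refine ⟨y, ?_, fun _ => hyO⟩
        rw [Real.dist_eq, abs_sub_comm] at hyd
        exact hyd
      · exact ⟨f n, by simpa using hpos, fun hy => absurd hy h⟩
    choose g hg1 hg2 using hchoice
    refine ⟨fun k => g k.unpair.1 k.unpair.2, ?_, fun k hk => hg2 _ _ hk⟩
    ext l
    simp only [SeqAccPts, Set.mem_setOf_eq]
    constructor
    · intro hl
      by_contra hlS
      obtain ⟨δ, hδ, hball⟩ := Metric.isOpen_iff.mp hScl.isOpen_compl l hlS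
      have hfar : ∀ n, δ ≤ |f n - l| := by
        intro n
        by_contra h
        push_neg at h
        exact hball (by rwa [Metric.mem_ball, Real.dist_eq]) (hfS n)
      have hfin : {k : ℕ | |g k.unpair.1 k.unpair.2 - l| < δ / 2}.Finite := by
        have hA : (Set.Icc (0 : ℕ) ⌈2 / δ⌉₊ ×ˢ Set.Icc (0 : ℕ) ⌈2 / δ⌉₊).Finite :=
          (Set.finite_Icc _ _).prod (Set.finite_Icc _ _)
        have hinj : Function.Injective Nat.unpair := fun a b hab => by
          rw [← Nat.pair_unpair a, ← Nat.pair_unpair b, hab]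
        apply Set.Finite.subset (hA.preimage (Set.injOn_of_injective hinj))
        intro k hk
        simp only [Set.mem_setOf_eq] at hk
        set n := k.unpair.1
        set m := k.unpair.2
        have h1 : |g n m - f n| < 1 / (n + m + 1 : ℝ) := hg1 n m
        have h2 : δ ≤ |f n - l| := hfar n
        have h3 : |f n - l| ≤ |f n - g n m| + |g n m - l| := abs_sub_le _ _ _
        rw [abs_sub_comm (f n) (g n m)] at h3
        have h4 : δ / 2 < 1 / (n + m + 1 : ℝ) := by linarith
        have hc : (0:ℝ) < (n : ℝ) + m + 1 := by positivity
        have h5 : (n + m + 1 : ℝ) < 2 / δ := by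
          rw [lt_div_iff₀ hδ]
          rw [div_lt_div_iff₀ (by norm_num) hc] at h4
          nlinarith
        have hn : (n : ℝ) ≤ (⌈2 / δ⌉₊ : ℝ) := by
          have : (n : ℝ) < 2 / δ := by
            have : (0:ℝ) ≤ (m:ℝ) := Nat.cast_nonneg m
            linarith
          exact this.le.trans (Nat.le_ceil _)
        have hm : (m : ℝ) ≤ (⌈2 / δ⌉₊ : ℝ) := by
          have : (m : ℝ) < 2 / δ := by
            have : (0:ℝ) ≤ (n:ℝ) := Nat.cast_nonneg n
            linarith
          exact this.le.trans (Nat.le_ceil _)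
        exact ⟨Set.mem_Icc.mpr ⟨Nat.zero_le _, by exact_mod_cast hn⟩,
               Set.mem_Icc.mpr ⟨Nat.zero_le _, by exact_mod_cast hm⟩⟩
      exact (hl (δ / 2) (by linarith)) hfin
    · intro hx ε hε
      obtain ⟨n, hn⟩ := hdense l hx (ε / 2) (by linarith)
      set N := ⌈2 / ε⌉₊ with hN
      apply Set.infinite_of_injective_forall_mem
        (f := fun j : ℕ => Nat.pair n (j + N))
      · intro a b hab
        have := congrArg (fun k => (Nat.unpair k).2) hab
        simpa [Nat.unpair_pair] using this
      · intro j
        simp only [Set.mem_setOf_eq, Nat.unpair_pair]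
        have h1 := hg1 n (j + N)
        push_cast at h1
        have h2 : (1 : ℝ) / (n + (j + N) + 1 : ℝ) ≤ ε / 2 := by
          rw [div_le_div_iff₀ (by positivity) (by linarith)]
          have hc : (2 / ε : ℝ) ≤ (N : ℝ) := Nat.le_ceil _
          have hnn : (0:ℝ) ≤ (n:ℝ) := Nat.cast_nonneg n
          have hjn : (0:ℝ) ≤ (j:ℝ) := Nat.cast_nonneg j
          rw [div_le_iff₀ hε] at hc
          nlinarith
        calc |g n (j + N) - l| ≤ |g n (j + N) - f n| + |f n - l| := abs_sub_le _ _ _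
          _ < ε := by linarith
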